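/- arXiv:2603.10336 — 2 statements merged into one kernel-verified Lean document; each statement's English description precedes it below -/
import Mathlib

section
/- Monotonicity of the discrete time-dependent MFG residual operator: suppose each g_{i,j} is continuously differentiable and strictly convex on ℝ⁴, and f : (0,∞) → ℝ is strictly increasing. Let Y = (M₁,…,M_{N_T}, U₀,…,U_{N_T−1}) and Ỹ = (M̃₁,…,M̃_{N_T}, Ũ₀,…,Ũ_{N_T−1}) be two states whose density components are all strictly positive componentwise, sharing the same fixed endpoint data M₀ and U_{N_T}. Then ⟨F_h(Y) − F_h(Ỹ), Y − Ỹ⟩_{h,Δt} ≥ 0, where the pairing matches each residual block r_k with the density difference M_k − M̃_k and each residual block s_k with the value difference U_{k−1} − Ũ_{k−1}. Moreover, the inequality is strict whenever M_k ≠ M̃_k for some k ∈ {1,…,N_T}, or [D_h U_{k−1}]_{i,j} ≠ [D_h Ũ_{k−1}]_{i,j} for some k ∈ {1,…,N_T} and some node (i,j). -/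
open scoped BigOperators

/-- Grid functions on the periodic `N × N` grid `(ℤ/Nℤ)²`. -/
abbrev Grid (N : ℕ) : Type := ZMod N → ZMod N → ℝ

/-- Mesh size `h = 1/N`. -/
noncomputable def gridh (N : ℕ) : ℝ := 1 / N

/-- Discrete pairing `⟨a,b⟩_h = h² ∑_{i,j} a_{ij} b_{ij}`. -/
noncomputable def pairh (N : ℕ) [NeZero N] (a b : Grid N) : ℝ :=
  gridh N ^ 2 * ∑ i : ZMod N, ∑ j : ZMod N, a i j * b i j

/-- One-sided difference `(D₁⁺ y)_{ij} = (y_{i+1,j} - y_{ij}) / h`. -/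
noncomputable def D1p (N : ℕ) (y : Grid N) : Grid N := fun i j => (y (i + 1) j - y i j) / gridh N

/-- One-sided difference `(D₁⁻ y)_{ij} = (y_{ij} - y_{i-1,j}) / h`. -/
noncomputable def D1m (N : ℕ) (y : Grid N) : Grid N := fun i j => (y i j - y (i - 1) j) / gridh N

/-- One-sided difference `(D₂⁺ y)_{ij} = (y_{i,j+1} - y_{ij}) / h`. -/
noncomputable def D2p (N : ℕ) (y : Grid N) : Grid N := fun i j => (y i (j + 1) - y i j) / gridh N

/-- One-sided difference `(D₂⁻ y)_{ij} = (y_{ij} - y_{i,j-1}) / h`. -/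
noncomputable def D2m (N : ℕ) (y : Grid N) : Grid N := fun i j => (y i j - y i (j - 1)) / gridh N

/-- Five-point discrete Laplacian. -/
noncomputable def lapFD (N : ℕ) (y : Grid N) : Grid N :=
  fun i j => -(4 * y i j - y (i + 1) j - y (i - 1) j - y i (j + 1) - y i (j - 1)) / gridh N ^ 2

/-- Upwind stencil `[D_h y]_{ij} ∈ ℝ⁴`. -/
noncomputable def DHs (N : ℕ) (y : Grid N) (i j : ZMod N) : Fin 4 → ℝ :=
  ![D1p N y i j, D1m N y i j, D2p N y i j, D2m N y i j]

/-- `α^{(ℓ)}(U)_{ij} = (∂g_{ij}/∂q_ℓ)([D_h U]_{ij})`. -/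
noncomputable def alphaFD (N : ℕ) (g : ZMod N → ZMod N → (Fin 4 → ℝ) → ℝ)
    (U : Grid N) (l : Fin 4) : Grid N :=
  fun i j => fderiv ℝ (g i j) (DHs N U i j) (Pi.single l 1)

/-- Discrete transport operator `B_h(U, M)`. -/
noncomputable def Bh (N : ℕ) (g : ZMod N → ZMod N → (Fin 4 → ℝ) → ℝ) (U M : Grid N) : Grid N :=
  fun i j =>
    -D1m N (fun a b => M a b * alphaFD N g U 0 a b) i j
      - D1p N (fun a b => M a b * alphaFD N g U 1 a b) i j
      - D2m N (fun a b => M a b * alphaFD N g U 2 a b) i j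
      - D2p N (fun a b => M a b * alphaFD N g U 3 a b) i j

/-- HJB residual block `r_k`. -/
noncomputable def rkFD (N : ℕ) (g : ZMod N → ZMod N → (Fin 4 → ℝ) → ℝ) (f : ℝ → ℝ)
    (Vh : Grid N) (ν Δt : ℝ) (M U : ℕ → Grid N) (k : ℕ) : Grid N :=
  fun i j => (U k i j - U (k - 1) i j) / Δt + ν * lapFD N (U (k - 1)) i j
    - g i j (DHs N (U (k - 1)) i j) + f (M k i j) + Vh i j

/-- Fokker–Planck residual block `s_k`. -/
noncomputable def skFD (N : ℕ) (g : ZMod N → ZMod N → (Fin 4 → ℝ) → ℝ)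
    (ν Δt : ℝ) (M U : ℕ → Grid N) (k : ℕ) : Grid N :=
  fun i j => (M k i j - M (k - 1) i j) / Δt - ν * lapFD N (M k) i j
    + Bh N g (U (k - 1)) (M k) i j

/-- `r̄_k = ⟨M_k, r_k⟩_h / ⟨M_k, 1⟩_h`. -/
noncomputable def rbarFD (N : ℕ) [NeZero N] (g : ZMod N → ZMod N → (Fin 4 → ℝ) → ℝ) (f : ℝ → ℝ)
    (Vh : Grid N) (ν Δt : ℝ) (M U : ℕ → Grid N) (k : ℕ) : ℝ :=
  pairh N (M k) (rkFD N g f Vh ν Δt M U k) / pairh N (M k) (fun _ _ => 1)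

/-- Entropy functional `E(Y)`. -/
noncomputable def entE (N : ℕ) [NeZero N] (NT : ℕ) (Δt : ℝ) (M U : ℕ → Grid N) : ℝ :=
  Δt * ∑ k ∈ Finset.Icc 1 NT, pairh N (M k) (fun i j => Real.log (M k i j) - 1)
    + Δt / 2 * ∑ k ∈ Finset.range NT, pairh N (U k) (U k)

/-- Bregman divergence of the entropy, `D_E(Y*, Y)`. -/
noncomputable def DE (N : ℕ) [NeZero N] (NT : ℕ) (Δt : ℝ) (M' U' M U : ℕ → Grid N) : ℝ :=
  entE N NT Δt M' U' - entE N NT Δt M U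
    - (Δt * ∑ k ∈ Finset.Icc 1 NT,
        pairh N (fun i j => Real.log (M k i j)) (fun i j => M' k i j - M k i j)
      + Δt * ∑ k ∈ Finset.range NT, pairh N (U k) (fun i j => U' k i j - U k i j))

/-- The Hessian–Riemannian flow equations on a set `D` of artificial times. -/
def IsHRFOn (N : ℕ) [NeZero N] (NT : ℕ) (g : ZMod N → ZMod N → (Fin 4 → ℝ) → ℝ)
    (f : ℝ → ℝ) (Vh : Grid N) (ν Δt : ℝ)
    (Ms Us : ℝ → ℕ → Grid N) (D : Set ℝ) : Prop :=
  ∀ s ∈ D, ∀ k ∈ Finset.Icc 1 NT,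
    (∀ i j, HasDerivWithinAt (fun t => Ms t k i j)
      (-(Ms s k i j) * (rkFD N g f Vh ν Δt (Ms s) (Us s) k i j
        - rbarFD N g f Vh ν Δt (Ms s) (Us s) k)) D s) ∧
    (∀ i j, HasDerivWithinAt (fun t => Us t (k - 1) i j)
      (-(skFD N g ν Δt (Ms s) (Us s) k i j)) D s)

/-! Expanding the pairing node by node, the discrete time derivatives of `U` and `M` combine into a
telescoping sum, which vanishes because both states share `M₀` and `U_{N_T}`; the viscous terms
cancel because the five-point Laplacian is symmetric; and summation by parts turns the transport
term into `M · dg(p)(p - p̃)` with `p = [D_h U_{k-1}]`, so that the Hamiltonian terms become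
Bregman divergences of `g` weighted by the densities. The remainder at each node,
`mfgDissipation`, is nonnegative by monotonicity of `f` and convexity of `g`, and positive where
`M ≠ M̃` or `p ≠ p̃` by strictness. -/

section GridCalculus

variable {N : ℕ}

theorem lapFD_eq (y : Grid N) (i j : ZMod N) :
    lapFD N y i j = D1p N (D1m N y) i j + D2p N (D2m N y) i j := by
  simp only [lapFD, D1p, D1m, D2p, D2m, add_sub_cancel_right]
  ring

theorem DHs_sub (a b : Grid N) (i j : ZMod N) :
    DHs N (a - b) i j = DHs N a i j - DHs N b i j := by
  ext l
  fin_cases l <;> simp only [DHs, D1p, D1m, D2p, D2m, Pi.sub_apply, Fin.reduceFinMk,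
    Matrix.cons_val] <;> ring

variable [NeZero N]

theorem sum_sum_shift_fst_mul (a b : Grid N) :
    ∑ i, ∑ j, a (i - 1) j * b i j = ∑ i, ∑ j, a i j * b (i + 1) j :=
  Fintype.sum_equiv (Equiv.subRight 1) _ _ fun i => by simp

theorem sum_sum_shift_snd_mul (a b : Grid N) :
    ∑ i, ∑ j, a i (j - 1) * b i j = ∑ i, ∑ j, a i j * b i (j + 1) :=
  Finset.sum_congr rfl fun i _ => Fintype.sum_equiv (Equiv.subRight 1) _ _ fun j => by simp

theorem sum_sum_D1m_mul (a b : Grid N) :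
    ∑ i, ∑ j, D1m N a i j * b i j = -∑ i, ∑ j, a i j * D1p N b i j := by
  simp only [D1m, D1p, div_mul_eq_mul_div, mul_div_assoc', ← Finset.sum_div, sub_mul, mul_sub,
    Finset.sum_sub_distrib, sum_sum_shift_fst_mul]
  ring

theorem sum_sum_D2m_mul (a b : Grid N) :
    ∑ i, ∑ j, D2m N a i j * b i j = -∑ i, ∑ j, a i j * D2p N b i j := by
  simp only [D2m, D2p, div_mul_eq_mul_div, mul_div_assoc', ← Finset.sum_div, sub_mul, mul_sub,
    Finset.sum_sub_distrib, sum_sum_shift_snd_mul]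
  ring

theorem sum_sum_D1p_mul (a b : Grid N) :
    ∑ i, ∑ j, D1p N a i j * b i j = -∑ i, ∑ j, a i j * D1m N b i j := by
  simp only [mul_comm (D1p N a _ _), mul_comm (a _ _), sum_sum_D1m_mul, neg_neg]

theorem sum_sum_D2p_mul (a b : Grid N) :
    ∑ i, ∑ j, D2p N a i j * b i j = -∑ i, ∑ j, a i j * D2m N b i j := by
  simp only [mul_comm (D2p N a _ _), mul_comm (a _ _), sum_sum_D2m_mul, neg_neg]

theorem sum_sum_lapFD_mul_comm (a b : Grid N) :
    ∑ i, ∑ j, lapFD N a i j * b i j = ∑ i, ∑ j, a i j * lapFD N b i j := by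
  have dirichlet (x y : Grid N) : ∑ i, ∑ j, lapFD N x i j * y i j
      = -(∑ i, ∑ j, D1m N x i j * D1m N y i j) - ∑ i, ∑ j, D2m N x i j * D2m N y i j := by
    simp only [lapFD_eq, add_mul, Finset.sum_add_distrib, sum_sum_D1p_mul, sum_sum_D2p_mul]
    ring
  simp only [mul_comm (a _ _) (lapFD N b _ _), dirichlet, mul_comm (D1m N a _ _),
    mul_comm (D2m N a _ _)]

end GridCalculus

theorem LinearMap.apply_eq_sum_smul_apply_single {ι R M : Type*} [Fintype ι] [DecidableEq ι]
    [CommSemiring R] [AddCommMonoid M] [Module R M] (L : (ι → R) →ₗ[R] M) (v : ι → R) :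
    L v = ∑ l, v l • L (Pi.single l 1) := by
  conv_lhs => rw [pi_eq_sum_univ' v]
  simp only [map_sum, map_smul]

section Transport

variable {N : ℕ} (g : ZMod N → ZMod N → (Fin 4 → ℝ) → ℝ)

theorem fderiv_DHs_eq_sum_alphaFD (U w : Grid N) (i j : ZMod N) :
    fderiv ℝ (g i j) (DHs N U i j) (DHs N w i j)
      = alphaFD N g U 0 i j * D1p N w i j + alphaFD N g U 1 i j * D1m N w i j
        + alphaFD N g U 2 i j * D2p N w i j + alphaFD N g U 3 i j * D2m N w i j := by
  rw [← ContinuousLinearMap.coe_coe, LinearMap.apply_eq_sum_smul_apply_single, Fin.sum_univ_four]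
  simp only [ContinuousLinearMap.coe_coe, alphaFD, smul_eq_mul, DHs, Matrix.cons_val]
  ring

variable [NeZero N]

theorem sum_sum_Bh_mul (U M w : Grid N) :
    ∑ i, ∑ j, Bh N g U M i j * w i j
      = ∑ i, ∑ j, M i j * fderiv ℝ (g i j) (DHs N U i j) (DHs N w i j) := by
  simp only [Bh, fderiv_DHs_eq_sum_alphaFD, sub_mul, neg_mul, mul_add, Finset.sum_add_distrib,
    Finset.sum_sub_distrib, Finset.sum_neg_distrib, sum_sum_D1m_mul, sum_sum_D1p_mul,
    sum_sum_D2m_mul, sum_sum_D2p_mul, mul_assoc]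
  ring

end Transport

section Convexity

variable {E : Type*} [NormedAddCommGroup E] [NormedSpace ℝ E] {φ : E → ℝ} {x : E}

theorem ConvexOn.fderiv_apply_sub_le (hφ : ConvexOn ℝ Set.univ φ) (hx : DifferentiableAt ℝ φ x)
    (y : E) : fderiv ℝ φ x (y - x) ≤ φ y - φ x := by
  let line : ℝ →ᵃ[ℝ] E := AffineMap.lineMap x y
  have hline : HasDerivAt (φ ∘ line) (fderiv ℝ φ x (y - x)) 0 :=
    hx.hasFDerivAt.comp_hasDerivAt_of_eq 0 AffineMap.hasDerivAt_lineMap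
      (AffineMap.lineMap_apply_zero x y).symm
  have := (hφ.comp_affineMap line).le_slope_of_hasDerivAt (Set.mem_univ 0) (Set.mem_univ 1)
    zero_lt_one hline
  simpa [slope, line] using this

theorem StrictConvexOn.fderiv_apply_sub_lt (hφ : StrictConvexOn ℝ Set.univ φ)
    (hx : DifferentiableAt ℝ φ x) {y : E} (hxy : x ≠ y) :
    fderiv ℝ φ x (y - x) < φ y - φ x := by
  have hmid := hφ.2 (Set.mem_univ x) (Set.mem_univ y) hxy one_half_pos one_half_pos
    (add_halves 1)
  have htan := hφ.convexOn.fderiv_apply_sub_le hx ((1 / 2 : ℝ) • x + (1 / 2 : ℝ) • y)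
  have hsub : (1 / 2 : ℝ) • x + (1 / 2 : ℝ) • y - x = (1 / 2 : ℝ) • (y - x) := by module
  rw [hsub, map_smul, smul_eq_mul] at htan
  simp only [smul_eq_mul] at hmid
  linarith

end Convexity

section MonotoneProduct

variable {R : Type*} [CommRing R] [LinearOrder R] [IsStrictOrderedRing R] {s : Set R} {f : R → R}
  {a b : R}

theorem MonotoneOn.sub_mul_sub_nonneg (hf : MonotoneOn f s) (ha : a ∈ s) (hb : b ∈ s) : 0 ≤ (f a - f b) * (a - b) := by
  rcases le_total a b with h | h
  · exact mul_nonneg_of_nonpos_of_nonpos (sub_nonpos.2 (hf ha hb h)) (sub_nonpos.2 h)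
  · exact mul_nonneg (sub_nonneg.2 (hf hb ha h)) (sub_nonneg.2 h)

theorem StrictMonoOn.sub_mul_sub_pos (hf : StrictMonoOn f s) (ha : a ∈ s) (hb : b ∈ s)
    (hab : a ≠ b) : 0 < (f a - f b) * (a - b) := by
  rcases hab.lt_or_gt with h | h
  · exact mul_pos_of_neg_of_neg (sub_neg.2 (hf ha hb h)) (sub_neg.2 h)
  · exact mul_pos (sub_pos.2 (hf hb ha h)) (sub_pos.2 h)

end MonotoneProduct

section Dissipation

variable {E : Type*} [NormedAddCommGroup E] [NormedSpace ℝ E]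

noncomputable def mfgDissipation (f : ℝ → ℝ) (φ : E → ℝ) (m m' : ℝ) (p p' : E) : ℝ :=
  (f m - f m') * (m - m') + m * (φ p' - φ p - fderiv ℝ φ p (p' - p))
    + m' * (φ p - φ p' - fderiv ℝ φ p' (p - p'))

variable {f : ℝ → ℝ} {φ : E → ℝ} {m m' : ℝ} {p p' : E}

theorem mfgDissipation_nonneg (hf : MonotoneOn f (Set.Ioi 0)) (hφ : ConvexOn ℝ Set.univ φ)
    (hp : DifferentiableAt ℝ φ p) (hp' : DifferentiableAt ℝ φ p') (hm : 0 < m) (hm' : 0 < m') :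
    0 ≤ mfgDissipation f φ m m' p p' :=
  add_nonneg (add_nonneg (hf.sub_mul_sub_nonneg hm hm')
    (mul_nonneg hm.le (sub_nonneg.2 (hφ.fderiv_apply_sub_le hp p'))))
    (mul_nonneg hm'.le (sub_nonneg.2 (hφ.fderiv_apply_sub_le hp' p)))

theorem mfgDissipation_pos (hf : StrictMonoOn f (Set.Ioi 0)) (hφ : StrictConvexOn ℝ Set.univ φ)
    (hp : DifferentiableAt ℝ φ p) (hp' : DifferentiableAt ℝ φ p') (hm : 0 < m) (hm' : 0 < m')
    (hne : m ≠ m' ∨ p ≠ p') : 0 < mfgDissipation f φ m m' p p' := by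
  have hcoupling := hf.monotoneOn.sub_mul_sub_nonneg hm hm'
  have hbreg := mul_nonneg hm.le (sub_nonneg.2 (hφ.convexOn.fderiv_apply_sub_le hp p'))
  have hbreg' := mul_nonneg hm'.le (sub_nonneg.2 (hφ.convexOn.fderiv_apply_sub_le hp' p))
  unfold mfgDissipation
  rcases hne with hne | hne
  · linarith [hf.sub_mul_sub_pos hm hm' hne]
  · linarith [mul_pos hm (sub_pos.2 (hφ.fderiv_apply_sub_lt hp hne))]

end Dissipation

section ResidualPairing

variable {N : ℕ} [NeZero N] (g : ZMod N → ZMod N → (Fin 4 → ℝ) → ℝ) (f : ℝ → ℝ) (Vh : Grid N)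
  (ν Δt : ℝ) (M U M' U' : ℕ → Grid N)

theorem sum_sum_residual_pairing_eq (k : ℕ) :
    ∑ i, ∑ j, (rkFD N g f Vh ν Δt M U k i j - rkFD N g f Vh ν Δt M' U' k i j)
        * (M k i j - M' k i j)
      + ∑ i, ∑ j, (skFD N g ν Δt M U k i j - skFD N g ν Δt M' U' k i j)
        * (U (k - 1) i j - U' (k - 1) i j)
    = (∑ i, ∑ j, (U k i j - U' k i j) * (M k i j - M' k i j)
        - ∑ i, ∑ j, (U (k - 1) i j - U' (k - 1) i j) * (M (k - 1) i j - M' (k - 1) i j)) / Δt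
      + ∑ i, ∑ j, mfgDissipation f (g i j) (M k i j) (M' k i j)
          (DHs N (U (k - 1)) i j) (DHs N (U' (k - 1)) i j) := by
  set δU := U (k - 1) - U' (k - 1)
  set δM := M k - M' k
  have hlap := sum_sum_lapFD_mul_comm δU δM
  have htransport := sum_sum_Bh_mul g (U (k - 1)) (M k) δU
  have htransport' := sum_sum_Bh_mul g (U' (k - 1)) (M' k) δU
  have hpointwise : ∀ i j,
      (rkFD N g f Vh ν Δt M U k i j - rkFD N g f Vh ν Δt M' U' k i j) * δM i j
        + (skFD N g ν Δt M U k i j - skFD N g ν Δt M' U' k i j) * δU i j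
      = ((U k i j - U' k i j) * (M k i j - M' k i j)
          - (U (k - 1) i j - U' (k - 1) i j) * (M (k - 1) i j - M' (k - 1) i j)) / Δt
        + mfgDissipation f (g i j) (M k i j) (M' k i j)
          (DHs N (U (k - 1)) i j) (DHs N (U' (k - 1)) i j)
        + ν * (lapFD N δU i j * δM i j - δU i j * lapFD N δM i j)
        + (Bh N g (U (k - 1)) (M k) i j * δU i j
            - M k i j * fderiv ℝ (g i j) (DHs N (U (k - 1)) i j) (DHs N δU i j))
        - (Bh N g (U' (k - 1)) (M' k) i j * δU i j
            - M' k i j * fderiv ℝ (g i j) (DHs N (U' (k - 1)) i j) (DHs N δU i j)) := by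
    intro i j
    simp only [δU, δM, rkFD, skFD, mfgDissipation, DHs_sub, map_sub, Pi.sub_apply, lapFD]
    ring
  have hsum := congrArg (fun F : Grid N => ∑ i, ∑ j, F i j) (funext₂ hpointwise)
  simp only [Finset.sum_add_distrib, Finset.sum_sub_distrib, ← Finset.mul_sum,
    ← Finset.sum_div] at hsum
  simp only [δU, δM, Pi.sub_apply] at hsum hlap htransport htransport' ⊢
  linear_combination hsum + ν * hlap + htransport - htransport'

end ResidualPairing

theorem sum_Icc_sub_pred {A : Type*} [AddCommGroup A] (G : ℕ → A) (n : ℕ) :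
    ∑ k ∈ Finset.Icc 1 n, (G k - G (k - 1)) = G n - G 0 := by
  induction n with
  | zero => simp
  | succ n ih =>
    rw [Finset.sum_Icc_succ_top (by omega), ih, Nat.add_sub_cancel]
    abel

section DoubleSum

variable {α β R : Type*} [Fintype α] [Fintype β] [AddCommMonoid R] [PartialOrder R]
  [IsOrderedCancelAddMonoid R] {F : α → β → R}

theorem sum_sum_nonneg (hF : ∀ a b, 0 ≤ F a b) : 0 ≤ ∑ a, ∑ b, F a b :=
  Finset.sum_nonneg fun a _ => Finset.sum_nonneg fun b _ => hF a b

theorem sum_sum_pos (hF : ∀ a b, 0 ≤ F a b) {a : α} {b : β} (hab : 0 < F a b) :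
    0 < ∑ a, ∑ b, F a b :=
  Finset.sum_pos' (fun a _ => Finset.sum_nonneg fun b _ => hF a b)
    ⟨a, Finset.mem_univ a, Finset.sum_pos' (fun b _ => hF a b) ⟨b, Finset.mem_univ b, hab⟩⟩

end DoubleSum

theorem residual_pairing_eq_sum_mfgDissipation {N : ℕ} [NeZero N] (NT : ℕ) (Δt ν : ℝ)
    (g : ZMod N → ZMod N → (Fin 4 → ℝ) → ℝ) (f : ℝ → ℝ) (Vh : Grid N)
    {M U M' U' : ℕ → Grid N} (hM0 : M 0 = M' 0) (hUT : U NT = U' NT) :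
    Δt * ∑ k ∈ Finset.Icc 1 NT,
          pairh N (fun i j => rkFD N g f Vh ν Δt M U k i j - rkFD N g f Vh ν Δt M' U' k i j)
            (fun i j => M k i j - M' k i j)
        + Δt * ∑ k ∈ Finset.Icc 1 NT,
          pairh N (fun i j => skFD N g ν Δt M U k i j - skFD N g ν Δt M' U' k i j)
            (fun i j => U (k - 1) i j - U' (k - 1) i j)
      = Δt * gridh N ^ 2 * ∑ k ∈ Finset.Icc 1 NT, ∑ i, ∑ j,
          mfgDissipation f (g i j) (M k i j) (M' k i j)
            (DHs N (U (k - 1)) i j) (DHs N (U' (k - 1)) i j) := by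
  simp only [pairh, ← Finset.mul_sum]
  rw [← mul_add, ← mul_add, ← Finset.sum_add_distrib]
  simp only [sum_sum_residual_pairing_eq]
  rw [Finset.sum_add_distrib, ← Finset.sum_div,
    sum_Icc_sub_pred (fun k => ∑ i, ∑ j, (U k i j - U' k i j) * (M k i j - M' k i j))]
  simp only [hM0, hUT, sub_self, mul_zero, zero_mul, Finset.sum_const_zero, zero_div, zero_add]
  ring

theorem discrete_mfg_residual_monotone_general (N : ℕ) [NeZero N] (NT : ℕ)
    (Δt ν : ℝ) (hΔt : 0 < Δt)
    (g : ZMod N → ZMod N → (Fin 4 → ℝ) → ℝ)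
    (hg1 : ∀ i j, ContDiff ℝ 1 (g i j))
    (hg2 : ∀ i j, StrictConvexOn ℝ Set.univ (g i j))
    (f : ℝ → ℝ) (hf : StrictMonoOn f (Set.Ioi 0))
    (Vh : Grid N)
    (M U M' U' : ℕ → Grid N)
    (hpos : ∀ k ∈ Finset.Icc 1 NT, ∀ i j, 0 < M k i j)
    (hpos' : ∀ k ∈ Finset.Icc 1 NT, ∀ i j, 0 < M' k i j)
    (hM0 : M 0 = M' 0) (hUT : U NT = U' NT) :
    0 ≤ Δt * ∑ k ∈ Finset.Icc 1 NT,
          pairh N (fun i j => rkFD N g f Vh ν Δt M U k i j - rkFD N g f Vh ν Δt M' U' k i j)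
            (fun i j => M k i j - M' k i j)
        + Δt * ∑ k ∈ Finset.Icc 1 NT,
          pairh N (fun i j => skFD N g ν Δt M U k i j - skFD N g ν Δt M' U' k i j)
            (fun i j => U (k - 1) i j - U' (k - 1) i j) ∧
    (((∃ k ∈ Finset.Icc 1 NT, M k ≠ M' k) ∨
        (∃ k ∈ Finset.Icc 1 NT, ∃ i j, DHs N (U (k - 1)) i j ≠ DHs N (U' (k - 1)) i j)) →
      0 < Δt * ∑ k ∈ Finset.Icc 1 NT,
            pairh N (fun i j => rkFD N g f Vh ν Δt M U k i j - rkFD N g f Vh ν Δt M' U' k i j)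
              (fun i j => M k i j - M' k i j)
          + Δt * ∑ k ∈ Finset.Icc 1 NT,
            pairh N (fun i j => skFD N g ν Δt M U k i j - skFD N g ν Δt M' U' k i j)
              (fun i j => U (k - 1) i j - U' (k - 1) i j)) := by
  rw [residual_pairing_eq_sum_mfgDissipation NT Δt ν g f Vh hM0 hUT]
  have hweight : 0 < Δt * gridh N ^ 2 := by
    have : (0 : ℝ) < N := Nat.cast_pos.2 (Nat.pos_of_neZero N)
    unfold gridh
    positivity
  have hdiff (i j) (p : Fin 4 → ℝ) : DifferentiableAt ℝ (g i j) p :=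
    (hg1 i j).differentiable one_ne_zero p
  have hnonneg : ∀ k ∈ Finset.Icc 1 NT, ∀ i j, 0 ≤ mfgDissipation f (g i j) (M k i j) (M' k i j)
      (DHs N (U (k - 1)) i j) (DHs N (U' (k - 1)) i j) := fun k hk i j =>
    mfgDissipation_nonneg hf.monotoneOn (hg2 i j).convexOn (hdiff i j _) (hdiff i j _)
      (hpos k hk i j) (hpos' k hk i j)
  refine ⟨mul_nonneg hweight.le (Finset.sum_nonneg fun k hk => sum_sum_nonneg (hnonneg k hk)),
    fun hne => mul_pos hweight ?_⟩
  obtain ⟨k, hk, i, j, hne⟩ : ∃ k ∈ Finset.Icc 1 NT, ∃ i j,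
      M k i j ≠ M' k i j ∨ DHs N (U (k - 1)) i j ≠ DHs N (U' (k - 1)) i j := by
    rcases hne with ⟨k, hk, hM⟩ | ⟨k, hk, i, j, hDU⟩
    · obtain ⟨i, hi⟩ := Function.ne_iff.1 hM
      obtain ⟨j, hj⟩ := Function.ne_iff.1 hi
      exact ⟨k, hk, i, j, .inl hj⟩
    · exact ⟨k, hk, i, j, .inr hDU⟩
  refine Finset.sum_pos' (fun k hk => sum_sum_nonneg (hnonneg k hk)) ⟨k, hk, sum_sum_pos
    (hnonneg k hk) (mfgDissipation_pos hf (hg2 i j) (hdiff i j _) (hdiff i j _) (hpos k hk i j)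
      (hpos' k hk i j) hne)⟩

/-- strict monotonicity of the discrete time-dependent MFG residual operator. -/
theorem discrete_mfg_residual_monotone (N : ℕ) [NeZero N] (NT : ℕ) (hNT : 1 ≤ NT)
    (Δt ν : ℝ) (hΔt : 0 < Δt) (hν : 0 ≤ ν)
    (g : ZMod N → ZMod N → (Fin 4 → ℝ) → ℝ)
    (hg1 : ∀ i j, ContDiff ℝ 1 (g i j))
    (hg2 : ∀ i j, StrictConvexOn ℝ Set.univ (g i j))
    (f : ℝ → ℝ) (hf : StrictMonoOn f (Set.Ioi 0))
    (Vh : Grid N)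
    (M U M' U' : ℕ → Grid N)
    (hpos : ∀ k ∈ Finset.Icc 1 NT, ∀ i j, 0 < M k i j)
    (hpos' : ∀ k ∈ Finset.Icc 1 NT, ∀ i j, 0 < M' k i j)
    (hM0 : M 0 = M' 0) (hUT : U NT = U' NT) :
    0 ≤ Δt * ∑ k ∈ Finset.Icc 1 NT,
          pairh N (fun i j => rkFD N g f Vh ν Δt M U k i j - rkFD N g f Vh ν Δt M' U' k i j)
            (fun i j => M k i j - M' k i j)
        + Δt * ∑ k ∈ Finset.Icc 1 NT,
          pairh N (fun i j => skFD N g ν Δt M U k i j - skFD N g ν Δt M' U' k i j)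
            (fun i j => U (k - 1) i j - U' (k - 1) i j) ∧
    (((∃ k ∈ Finset.Icc 1 NT, M k ≠ M' k) ∨
        (∃ k ∈ Finset.Icc 1 NT, ∃ i j, DHs N (U (k - 1)) i j ≠ DHs N (U' (k - 1)) i j)) →
      0 < Δt * ∑ k ∈ Finset.Icc 1 NT,
            pairh N (fun i j => rkFD N g f Vh ν Δt M U k i j - rkFD N g f Vh ν Δt M' U' k i j)
              (fun i j => M k i j - M' k i j)
          + Δt * ∑ k ∈ Finset.Icc 1 NT,
            pairh N (fun i j => skFD N g ν Δt M U k i j - skFD N g ν Δt M' U' k i j)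
              (fun i j => U (k - 1) i j - U' (k - 1) i j)) :=
  discrete_mfg_residual_monotone_general N NT Δt ν hΔt g hg1 hg2 f hf Vh M U M' U' hpos hpos' hM0
    hUT
end

section
/- Explicit form of the discrete Hessian–Riemannian flow direction: let each g_{i,j} be continuously differentiable on ℝ⁴ and let Y = (M₁,…,M_{N_T}, U₀,…,U_{N_T−1}) be a state with every M_k strictly positive componentwise. Consider the minimization, over tuples Ξ = (Ξ_{M_1},…,Ξ_{M_{N_T}}, Ξ_{U_0},…,Ξ_{U_{N_T−1}}) of grid functions satisfying ⟨Ξ_{M_k}, 1⟩_h = 0 for k = 1,…,N_T, of the functional (1/2)·(Δt Σ_{k=1}^{N_T} ⟨Ξ_{M_k}/M_k, Ξ_{M_k}⟩_h + Δt Σ_{k=0}^{N_T−1} ⟨Ξ_{U_k}, Ξ_{U_k}⟩_h) + ⟨F_h(Y), Ξ⟩_{h,Δt}, where division of grid functions is componentwise. Then this problem has a unique minimizer, given explicitly by Ξ_{M_k} = −M_k ⊙ (r_k(Y) − r̄_k(Y)·1) for k = 1,…,N_T and Ξ_{U_{k−1}} = −s_k(Y) for k = 1,…,N_T, where r̄_k(Y)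 := ⟨M_k, r_k(Y)⟩_h / ⟨M_k, 1⟩_h, ⊙ denotes componentwise multiplication and 1 is the all-ones grid function. -/
open scoped BigOperators

/-- The objective of the variational problem defining the discrete HRF direction. -/
noncomputable def hrfObj (N : ℕ) [NeZero N] (NT : ℕ)
    (g : ZMod N → ZMod N → (Fin 4 → ℝ) → ℝ) (f : ℝ → ℝ) (Vh : Grid N)
    (ν Δt : ℝ) (M U : ℕ → Grid N)
    (Ξ : (Fin NT → Grid N) × (Fin NT → Grid N)) : ℝ :=
  1 / 2 * (Δt * ∑ v : Fin NT,
        pairh N (fun i j => Ξ.1 v i j / M (v.1 + 1) i j) (Ξ.1 v)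
      + Δt * ∑ v : Fin NT, pairh N (Ξ.2 v) (Ξ.2 v))
    + (Δt * ∑ v : Fin NT, pairh N (rkFD N g f Vh ν Δt M U (v.1 + 1)) (Ξ.1 v)
      + Δt * ∑ v : Fin NT, pairh N (skFD N g ν Δt M U (v.1 + 1)) (Ξ.2 v))

/-- The explicit candidate minimizer `Ξ*`. -/
noncomputable def xiStar (N : ℕ) [NeZero N] (NT : ℕ)
    (g : ZMod N → ZMod N → (Fin 4 → ℝ) → ℝ) (f : ℝ → ℝ) (Vh : Grid N)
    (ν Δt : ℝ) (M U : ℕ → Grid N) :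
    (Fin NT → Grid N) × (Fin NT → Grid N) :=
  (fun v => fun i j => -(M (v.1 + 1) i j) *
      (rkFD N g f Vh ν Δt M U (v.1 + 1) i j - rbarFD N g f Vh ν Δt M U (v.1 + 1)),
   fun v => fun i j => -(skFD N g ν Δt M U (v.1 + 1) i j))

section Aux

open Finset

variable (N : ℕ) [NeZero N]

lemma gridh_pos : 0 < gridh N := by
  have h : (0:ℝ) < N := by
    exact_mod_cast Nat.pos_of_ne_zero (NeZero.ne N)
  unfold gridh
  positivity

lemma gridh_sq_pos : 0 < gridh N ^ 2 := pow_pos (gridh_pos N) 2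

lemma pairh_one_pos (m : Grid N) (hm : ∀ i j, 0 < m i j) :
    0 < pairh N m (fun _ _ => 1) := by
  have : Nonempty (ZMod N) := ⟨0⟩
  unfold pairh
  apply mul_pos (gridh_sq_pos N)
  apply Finset.sum_pos _ Finset.univ_nonempty
  intro i _
  apply Finset.sum_pos _ Finset.univ_nonempty
  intro j _
  simpa using hm i j

lemma pairh_quad_nonneg (m d : Grid N) (hm : ∀ i j, 0 < m i j) :
    0 ≤ pairh N (fun i j => d i j / m i j) d := by
  unfold pairh
  apply mul_nonneg (gridh_sq_pos N).le
  apply Finset.sum_nonneg; intro i _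
  apply Finset.sum_nonneg; intro j _
  have h1 := hm i j
  have h2 : d i j / m i j * d i j = d i j ^ 2 / m i j := by ring
  rw [h2]; positivity

lemma pairh_quad_pos (m d : Grid N) (hm : ∀ i j, 0 < m i j)
    (i0 j0 : ZMod N) (hd : d i0 j0 ≠ 0) :
    0 < pairh N (fun i j => d i j / m i j) d := by
  unfold pairh
  apply mul_pos (gridh_sq_pos N)
  have hterm : ∀ i j, 0 ≤ d i j / m i j * d i j := by
    intro i j
    have h1 := hm i j
    have h2 : d i j / m i j * d i j = d i j ^ 2 / m i j := by ring
    rw [h2]; positivity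
  apply Finset.sum_pos'
  · intro i _; exact Finset.sum_nonneg fun j _ => hterm i j
  · refine ⟨i0, Finset.mem_univ _, ?_⟩
    apply Finset.sum_pos'
    · intro j _; exact hterm i0 j
    · refine ⟨j0, Finset.mem_univ _, ?_⟩
      have h1 := hm i0 j0
      have h2 : d i0 j0 / m i0 j0 * d i0 j0 = d i0 j0 ^ 2 / m i0 j0 := by ring
      have h3 : 0 < d i0 j0 ^ 2 := by
        rcases hd.lt_or_gt with h | h <;> nlinarith
      rw [h2]
      positivity

lemma pairh_sq_nonneg (d : Grid N) : 0 ≤ pairh N d d := by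
  unfold pairh
  apply mul_nonneg (gridh_sq_pos N).le
  apply Finset.sum_nonneg; intro i _
  apply Finset.sum_nonneg; intro j _
  exact mul_self_nonneg _

lemma pairh_sq_pos (d : Grid N) (i0 j0 : ZMod N) (hd : d i0 j0 ≠ 0) :
    0 < pairh N d d := by
  unfold pairh
  apply mul_pos (gridh_sq_pos N)
  apply Finset.sum_pos'
  · intro i _; exact Finset.sum_nonneg fun j _ => mul_self_nonneg _
  · refine ⟨i0, Finset.mem_univ _, ?_⟩
    apply Finset.sum_pos'
    · intro j _; exact mul_self_nonneg _
    · exact ⟨j0, Finset.mem_univ _, mul_self_pos.mpr hd⟩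

lemma xistar_mean_zero (m r : Grid N) (hm : ∀ i j, 0 < m i j) :
    pairh N (fun i j => -(m i j) *
      (r i j - pairh N m r / pairh N m (fun _ _ => 1))) (fun _ _ => 1) = 0 := by
  have hQ := pairh_one_pos N m hm
  have main : ∀ c : ℝ, pairh N (fun i j => -(m i j) * (r i j - c)) (fun _ _ => 1)
      = c * pairh N m (fun _ _ => 1) - pairh N m r := by
    intro c
    simp only [pairh, mul_one]
    have hs : ∑ i : ZMod N, ∑ j : ZMod N, -(m i j) * (r i j - c)
        = ∑ i : ZMod N, ∑ j : ZMod N, (c * m i j - m i j * r i j) :=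
      Finset.sum_congr rfl fun i _ => Finset.sum_congr rfl fun j _ => by ring
    rw [hs]
    simp only [Finset.sum_sub_distrib, ← Finset.mul_sum]
    ring
  rw [main, div_mul_cancel₀ _ hQ.ne']
  exact sub_self _

lemma blockM (m r ξ : Grid N) (c : ℝ) (hm : ∀ i j, m i j ≠ 0)
    (hc : pairh N ξ (fun _ _ => 1) = 0)
    (hcs : pairh N (fun i j => -(m i j) * (r i j - c)) (fun _ _ => 1) = 0) :
    pairh N (fun i j => ξ i j / m i j) ξ / 2 + pairh N r ξ
      = pairh N (fun i j => -(m i j) * (r i j - c) / m i j)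
            (fun i j => -(m i j) * (r i j - c)) / 2
        + pairh N r (fun i j => -(m i j) * (r i j - c))
        + pairh N (fun i j => (ξ i j - -(m i j) * (r i j - c)) / m i j)
            (fun i j => ξ i j - -(m i j) * (r i j - c)) / 2 := by
  have h2 := (gridh_sq_pos N).ne'
  simp only [pairh, mul_one] at hc hcs ⊢
  have main : ∑ i : ZMod N, ∑ j : ZMod N,
      (ξ i j / m i j * ξ i j / 2 + r i j * ξ i j
        - -(m i j) * (r i j - c) / m i j * (-(m i j) * (r i j - c)) / 2
        - r i j * (-(m i j) * (r i j - c))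
        - (ξ i j - -(m i j) * (r i j - c)) / m i j
            * (ξ i j - -(m i j) * (r i j - c)) / 2
        - c * ξ i j + c * (-(m i j) * (r i j - c))) = 0 := by
    apply Finset.sum_eq_zero; intro i _
    apply Finset.sum_eq_zero; intro j _
    have hmij := hm i j
    field_simp
    ring
  simp only [Finset.sum_add_distrib, Finset.sum_sub_distrib, ← Finset.sum_div,
    ← Finset.mul_sum] at main
  linear_combination (gridh N ^ 2) * main + c * hc - c * hcs

lemma blockU (s ξ : Grid N) :
    pairh N ξ ξ / 2 + pairh N s ξ
      = pairh N (fun i j => -(s i j)) (fun i j => -(s i j)) / 2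
        + pairh N s (fun i j => -(s i j))
        + pairh N (fun i j => ξ i j - -(s i j)) (fun i j => ξ i j - -(s i j)) / 2 := by
  simp only [pairh]
  have main : ∑ i : ZMod N, ∑ j : ZMod N,
      (ξ i j * ξ i j / 2 + s i j * ξ i j
        - -(s i j) * -(s i j) / 2 - s i j * -(s i j)
        - (ξ i j - -(s i j)) * (ξ i j - -(s i j)) / 2) = 0 := by
    apply Finset.sum_eq_zero; intro i _
    apply Finset.sum_eq_zero; intro j _
    ring
  simp only [Finset.sum_add_distrib, Finset.sum_sub_distrib, ← Finset.sum_div] at main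
  linear_combination (gridh N ^ 2) * main

end Aux
/-- explicit form of the discrete Hessian–Riemannian flow direction. -/
theorem hrf_direction_explicit (N : ℕ) [NeZero N] (NT : ℕ) (hNT : 1 ≤ NT)
    (Δt ν : ℝ) (hΔt : 0 < Δt) (hν : 0 ≤ ν)
    (g : ZMod N → ZMod N → (Fin 4 → ℝ) → ℝ)
    (hg : ∀ i j, ContDiff ℝ 1 (g i j))
    (f : ℝ → ℝ) (Vh : Grid N)
    (M U : ℕ → Grid N)
    (hpos : ∀ k ∈ Finset.Icc 1 NT, ∀ i j, 0 < M k i j) :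
    (∀ v : Fin NT,
        pairh N ((xiStar N NT g f Vh ν Δt M U).1 v) (fun _ _ => 1) = 0) ∧
    (∀ Ξ : (Fin NT → Grid N) × (Fin NT → Grid N),
        (∀ v : Fin NT, pairh N (Ξ.1 v) (fun _ _ => 1) = 0) →
        hrfObj N NT g f Vh ν Δt M U (xiStar N NT g f Vh ν Δt M U)
          ≤ hrfObj N NT g f Vh ν Δt M U Ξ) ∧
    (∀ Ξ : (Fin NT → Grid N) × (Fin NT → Grid N),
        (∀ v : Fin NT, pairh N (Ξ.1 v) (fun _ _ => 1) = 0) →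
        Ξ ≠ xiStar N NT g f Vh ν Δt M U →
        hrfObj N NT g f Vh ν Δt M U (xiStar N NT g f Vh ν Δt M U)
          < hrfObj N NT g f Vh ν Δt M U Ξ) := by
  have hmem : ∀ v : Fin NT, v.1 + 1 ∈ Finset.Icc 1 NT := fun v =>
    Finset.mem_Icc.mpr ⟨Nat.le_add_left 1 _, v.2⟩
  have hm : ∀ v : Fin NT, ∀ i j, 0 < M (v.1 + 1) i j := fun v => hpos _ (hmem v)
  have part1 : ∀ v : Fin NT,
      pairh N ((xiStar N NT g f Vh ν Δt M U).1 v) (fun _ _ => 1) = 0 := by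
    intro v
    exact xistar_mean_zero N (M (v.1 + 1)) (rkFD N g f Vh ν Δt M U (v.1 + 1)) (hm v)
  have keyv : ∀ Ξ : (Fin NT → Grid N) × (Fin NT → Grid N),
      (∀ v : Fin NT, pairh N (Ξ.1 v) (fun _ _ => 1) = 0) →
      hrfObj N NT g f Vh ν Δt M U Ξ
        = hrfObj N NT g f Vh ν Δt M U (xiStar N NT g f Vh ν Δt M U)
          + Δt / 2 * ∑ v : Fin NT,
              pairh N (fun i j => (Ξ.1 v i j - -(M (v.1 + 1) i j) *
                  (rkFD N g f Vh ν Δt M U (v.1 + 1) i j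
                    - rbarFD N g f Vh ν Δt M U (v.1 + 1))) / M (v.1 + 1) i j)
                (fun i j => Ξ.1 v i j - -(M (v.1 + 1) i j) *
                  (rkFD N g f Vh ν Δt M U (v.1 + 1) i j
                    - rbarFD N g f Vh ν Δt M U (v.1 + 1)))
          + Δt / 2 * ∑ v : Fin NT,
              pairh N (fun i j => Ξ.2 v i j - -(skFD N g ν Δt M U (v.1 + 1) i j))
                (fun i j => Ξ.2 v i j - -(skFD N g ν Δt M U (v.1 + 1) i j)) := by
    intro Ξ hc
    have h1 : ∑ v : Fin NT,
        (pairh N (fun i j => Ξ.1 v i j / M (v.1 + 1) i j) (Ξ.1 v) / 2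
          + pairh N (rkFD N g f Vh ν Δt M U (v.1 + 1)) (Ξ.1 v))
        = ∑ v : Fin NT,
        (pairh N (fun i j => -(M (v.1 + 1) i j) *
              (rkFD N g f Vh ν Δt M U (v.1 + 1) i j
                - rbarFD N g f Vh ν Δt M U (v.1 + 1)) / M (v.1 + 1) i j)
            (fun i j => -(M (v.1 + 1) i j) *
              (rkFD N g f Vh ν Δt M U (v.1 + 1) i j
                - rbarFD N g f Vh ν Δt M U (v.1 + 1))) / 2
          + pairh N (rkFD N g f Vh ν Δt M U (v.1 + 1))
            (fun i j => -(M (v.1 + 1) i j) *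
              (rkFD N g f Vh ν Δt M U (v.1 + 1) i j
                - rbarFD N g f Vh ν Δt M U (v.1 + 1)))
          + pairh N (fun i j => (Ξ.1 v i j - -(M (v.1 + 1) i j) *
                (rkFD N g f Vh ν Δt M U (v.1 + 1) i j
                  - rbarFD N g f Vh ν Δt M U (v.1 + 1))) / M (v.1 + 1) i j)
              (fun i j => Ξ.1 v i j - -(M (v.1 + 1) i j) *
                (rkFD N g f Vh ν Δt M U (v.1 + 1) i j
                  - rbarFD N g f Vh ν Δt M U (v.1 + 1))) / 2) := by
      refine Finset.sum_congr rfl fun v _ => ?_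
      exact blockM N (M (v.1 + 1)) (rkFD N g f Vh ν Δt M U (v.1 + 1)) (Ξ.1 v)
        (rbarFD N g f Vh ν Δt M U (v.1 + 1)) (fun i j => (hm v i j).ne')
        (hc v) (part1 v)
    have h2 : ∑ v : Fin NT,
        (pairh N (Ξ.2 v) (Ξ.2 v) / 2
          + pairh N (skFD N g ν Δt M U (v.1 + 1)) (Ξ.2 v))
        = ∑ v : Fin NT,
        (pairh N (fun i j => -(skFD N g ν Δt M U (v.1 + 1) i j))
            (fun i j => -(skFD N g ν Δt M U (v.1 + 1) i j)) / 2
          + pairh N (skFD N g ν Δt M U (v.1 + 1))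
            (fun i j => -(skFD N g ν Δt M U (v.1 + 1) i j))
          + pairh N (fun i j => Ξ.2 v i j - -(skFD N g ν Δt M U (v.1 + 1) i j))
              (fun i j => Ξ.2 v i j - -(skFD N g ν Δt M U (v.1 + 1) i j)) / 2) := by
      refine Finset.sum_congr rfl fun v _ => ?_
      exact blockU N (skFD N g ν Δt M U (v.1 + 1)) (Ξ.2 v)
    simp only [Finset.sum_add_distrib, ← Finset.sum_div] at h1 h2
    simp only [hrfObj, xiStar]
    linear_combination Δt * h1 + Δt * h2
  refine ⟨part1, ?_, ?_⟩
  · intro Ξ hc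
    rw [keyv Ξ hc]
    have hE : 0 ≤ ∑ v : Fin NT,
        pairh N (fun i j => (Ξ.1 v i j - -(M (v.1 + 1) i j) *
            (rkFD N g f Vh ν Δt M U (v.1 + 1) i j
              - rbarFD N g f Vh ν Δt M U (v.1 + 1))) / M (v.1 + 1) i j)
          (fun i j => Ξ.1 v i j - -(M (v.1 + 1) i j) *
            (rkFD N g f Vh ν Δt M U (v.1 + 1) i j
              - rbarFD N g f Vh ν Δt M U (v.1 + 1))) :=
      Finset.sum_nonneg fun v _ =>
        pairh_quad_nonneg N (M (v.1 + 1))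
          (fun i j => Ξ.1 v i j - -(M (v.1 + 1) i j) *
            (rkFD N g f Vh ν Δt M U (v.1 + 1) i j
              - rbarFD N g f Vh ν Δt M U (v.1 + 1))) (hm v)
    have hF : 0 ≤ ∑ v : Fin NT,
        pairh N (fun i j => Ξ.2 v i j - -(skFD N g ν Δt M U (v.1 + 1) i j))
          (fun i j => Ξ.2 v i j - -(skFD N g ν Δt M U (v.1 + 1) i j)) :=
      Finset.sum_nonneg fun v _ => pairh_sq_nonneg N _
    have c1 : (0:ℝ) ≤ Δt / 2 := by linarith
    nlinarith [mul_nonneg c1 hE, mul_nonneg c1 hF]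
  · intro Ξ hc hne
    rw [keyv Ξ hc]
    have hEv : ∀ v : Fin NT, 0 ≤
        pairh N (fun i j => (Ξ.1 v i j - -(M (v.1 + 1) i j) *
            (rkFD N g f Vh ν Δt M U (v.1 + 1) i j
              - rbarFD N g f Vh ν Δt M U (v.1 + 1))) / M (v.1 + 1) i j)
          (fun i j => Ξ.1 v i j - -(M (v.1 + 1) i j) *
            (rkFD N g f Vh ν Δt M U (v.1 + 1) i j
              - rbarFD N g f Vh ν Δt M U (v.1 + 1))) := fun v =>
      pairh_quad_nonneg N (M (v.1 + 1))
        (fun i j => Ξ.1 v i j - -(M (v.1 + 1) i j) *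
          (rkFD N g f Vh ν Δt M U (v.1 + 1) i j
            - rbarFD N g f Vh ν Δt M U (v.1 + 1))) (hm v)
    have hFv : ∀ v : Fin NT, 0 ≤
        pairh N (fun i j => Ξ.2 v i j - -(skFD N g ν Δt M U (v.1 + 1) i j))
          (fun i j => Ξ.2 v i j - -(skFD N g ν Δt M U (v.1 + 1) i j)) := fun v =>
      pairh_sq_nonneg N _
    have hE : 0 ≤ ∑ v : Fin NT,
        pairh N (fun i j => (Ξ.1 v i j - -(M (v.1 + 1) i j) *
            (rkFD N g f Vh ν Δt M U (v.1 + 1) i j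
              - rbarFD N g f Vh ν Δt M U (v.1 + 1))) / M (v.1 + 1) i j)
          (fun i j => Ξ.1 v i j - -(M (v.1 + 1) i j) *
            (rkFD N g f Vh ν Δt M U (v.1 + 1) i j
              - rbarFD N g f Vh ν Δt M U (v.1 + 1))) :=
      Finset.sum_nonneg fun v _ => hEv v
    have hF : 0 ≤ ∑ v : Fin NT,
        pairh N (fun i j => Ξ.2 v i j - -(skFD N g ν Δt M U (v.1 + 1) i j))
          (fun i j => Ξ.2 v i j - -(skFD N g ν Δt M U (v.1 + 1) i j)) :=
      Finset.sum_nonneg fun v _ => hFv v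
    have c1 : (0:ℝ) < Δt / 2 := by linarith
    by_cases h1 : Ξ.1 = (xiStar N NT g f Vh ν Δt M U).1
    · have h2 : Ξ.2 ≠ (xiStar N NT g f Vh ν Δt M U).2 := by
        intro h2
        exact hne (Prod.ext h1 h2)
      obtain ⟨v0, hv0⟩ := Function.ne_iff.mp h2
      obtain ⟨i0, hi0⟩ := Function.ne_iff.mp hv0
      obtain ⟨j0, hj0⟩ := Function.ne_iff.mp hi0
      have hd : (fun i j => Ξ.2 v0 i j - -(skFD N g ν Δt M U (v0.1 + 1) i j)) i0 j0 ≠ 0 :=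
        sub_ne_zero_of_ne hj0
      have hFpos : 0 < ∑ v : Fin NT,
          pairh N (fun i j => Ξ.2 v i j - -(skFD N g ν Δt M U (v.1 + 1) i j))
            (fun i j => Ξ.2 v i j - -(skFD N g ν Δt M U (v.1 + 1) i j)) :=
        Finset.sum_pos' (fun v _ => hFv v)
          ⟨v0, Finset.mem_univ _,
            pairh_sq_pos N (fun i j => Ξ.2 v0 i j - -(skFD N g ν Δt M U (v0.1 + 1) i j))
              i0 j0 hd⟩
      nlinarith [mul_pos c1 hFpos, mul_nonneg c1.le hE]
    · obtain ⟨v0, hv0⟩ := Function.ne_iff.mp h1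
      obtain ⟨i0, hi0⟩ := Function.ne_iff.mp hv0
      obtain ⟨j0, hj0⟩ := Function.ne_iff.mp hi0
      have hd : (fun i j => Ξ.1 v0 i j - -(M (v0.1 + 1) i j) *
          (rkFD N g f Vh ν Δt M U (v0.1 + 1) i j
            - rbarFD N g f Vh ν Δt M U (v0.1 + 1))) i0 j0 ≠ 0 :=
        sub_ne_zero_of_ne hj0
      have hEpos : 0 < ∑ v : Fin NT,
          pairh N (fun i j => (Ξ.1 v i j - -(M (v.1 + 1) i j) *
              (rkFD N g f Vh ν Δt M U (v.1 + 1) i j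
                - rbarFD N g f Vh ν Δt M U (v.1 + 1))) / M (v.1 + 1) i j)
            (fun i j => Ξ.1 v i j - -(M (v.1 + 1) i j) *
              (rkFD N g f Vh ν Δt M U (v.1 + 1) i j
                - rbarFD N g f Vh ν Δt M U (v.1 + 1))) :=
        Finset.sum_pos' (fun v _ => hEv v)
          ⟨v0, Finset.mem_univ _,
            pairh_quad_pos N (M (v0.1 + 1))
              (fun i j => Ξ.1 v0 i j - -(M (v0.1 + 1) i j) *
                (rkFD N g f Vh ν Δt M U (v0.1 + 1) i j
                  - rbarFD N g f Vh ν Δt M U (v0.1 + 1))) (hm v0) i0 j0 hd⟩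
      nlinarith [mul_pos c1 hEpos, mul_nonneg c1.le hF]
end
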